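/- arXiv:2307.02070 — 6 statements merged into one kernel-verified Lean document; each statement's English description precedes it below -/
import Mathlib

section
/- Let π be a probability measure on [0,∞) with Poisson mixture density p_π, and define f*(x) = (x+1)·p_π(x+1)/p_π(x) whenever p_π(x) > 0. Then f* is monotone nondecreasing: f*(x) ≤ f*(x+1) for all x with p_π(x), p_π(x+1) > 0. -/
open Real MeasureTheory

/-- Poisson pmf with mean `θ` at `k`. -/
noncomputable def poissonPMF (θ : ℝ) (k : ℕ) : ℝ :=
  Real.exp (-θ) * θ ^ k / (Nat.factorial k)

lemma poissonPMF_nonneg {θ : ℝ} (hθ : 0 ≤ θ) (k : ℕ) : 0 ≤ poissonPMF θ k := by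
  unfold poissonPMF
  positivity

lemma poissonPMF_continuous (k : ℕ) : Continuous (fun θ => poissonPMF θ k) := by
  unfold poissonPMF
  fun_prop

lemma poissonPMF_key (θ : ℝ) (x : ℕ) :
    ((x : ℝ) + 1) * poissonPMF θ (x + 1) ^ 2
      = ((x : ℝ) + 2) * (poissonPMF θ x * poissonPMF θ (x + 2)) := by
  unfold poissonPMF
  have h1 : (Nat.factorial (x + 1) : ℝ) = (x + 1) * Nat.factorial x := by
    push_cast [Nat.factorial_succ]; ring
  have h2 : (Nat.factorial (x + 2) : ℝ) = (x + 2) * ((x + 1) * Nat.factorial x) := by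
    push_cast [Nat.factorial_succ]; ring
  have hfx : (Nat.factorial x : ℝ) ≠ 0 := Nat.cast_ne_zero.mpr (Nat.factorial_ne_zero x)
  have hx1 : (x : ℝ) + 1 ≠ 0 := by positivity
  have hx2 : (x : ℝ) + 2 ≠ 0 := by positivity
  rw [h1, h2]
  field_simp
  ring

/-- The Bayes estimator `f*(x) = (x+1) p_π(x+1)/p_π(x)` for the Poisson mixture
is monotone nondecreasing wherever it is defined. -/
theorem stmt_2 (prior : Measure ℝ) [IsProbabilityMeasure prior]
    (hsupp : ∀ᵐ θ ∂prior, 0 ≤ θ)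
    (hint : ∀ y : ℕ, Integrable (fun θ => poissonPMF θ y) prior)
    (x : ℕ)
    (hx : 0 < ∫ θ, poissonPMF θ x ∂prior)
    (hx1 : 0 < ∫ θ, poissonPMF θ (x + 1) ∂prior) :
    ((x : ℝ) + 1) * (∫ θ, poissonPMF θ (x + 1) ∂prior) / (∫ θ, poissonPMF θ x ∂prior)
      ≤ ((x : ℝ) + 2) * (∫ θ, poissonPMF θ (x + 2) ∂prior)
          / (∫ θ, poissonPMF θ (x + 1) ∂prior) := by
  set A := ∫ θ, poissonPMF θ x ∂prior with hA
  set B := ∫ θ, poissonPMF θ (x + 1) ∂prior with hB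
  set C := ∫ θ, poissonPMF θ (x + 2) ∂prior with hC
  have hCnn : 0 ≤ C := by
    refine integral_nonneg_of_ae ?_
    filter_upwards [hsupp] with θ hθ using poissonPMF_nonneg hθ _
  -- functions f = sqrt p_x, g = sqrt p_{x+2}
  set f : ℝ → ℝ := fun θ => Real.sqrt (poissonPMF θ x) with hf
  set g : ℝ → ℝ := fun θ => Real.sqrt (poissonPMF θ (x + 2)) with hg
  have hfm : AEStronglyMeasurable f prior :=
    (Real.continuous_sqrt.comp (poissonPMF_continuous x)).aestronglyMeasurable
  have hgm : AEStronglyMeasurable g prior :=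
    (Real.continuous_sqrt.comp (poissonPMF_continuous (x + 2))).aestronglyMeasurable
  have hfsq : (fun θ => f θ ^ 2) =ᵐ[prior] fun θ => poissonPMF θ x := by
    filter_upwards [hsupp] with θ hθ using Real.sq_sqrt (poissonPMF_nonneg hθ x)
  have hgsq : (fun θ => g θ ^ 2) =ᵐ[prior] fun θ => poissonPMF θ (x + 2) := by
    filter_upwards [hsupp] with θ hθ using Real.sq_sqrt (poissonPMF_nonneg hθ (x + 2))
  have hfL2 : MemLp f 2 prior :=
    (memLp_two_iff_integrable_sq hfm).mpr ((hint x).congr hfsq.symm)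
  have hgL2 : MemLp g 2 prior :=
    (memLp_two_iff_integrable_sq hgm).mpr ((hint (x + 2)).congr hgsq.symm)
  have hfnn : 0 ≤ᵐ[prior] f := Filter.Eventually.of_forall fun θ => Real.sqrt_nonneg _
  have hgnn : 0 ≤ᵐ[prior] g := Filter.Eventually.of_forall fun θ => Real.sqrt_nonneg _
  have hpq : (2 : ℝ).HolderConjugate 2 := by
    constructor <;> norm_num
  have holder := integral_mul_le_Lp_mul_Lq_of_nonneg hpq hfnn hgnn
    (by simpa using hfL2) (by simpa using hgL2)
  simp only [show (2:ℝ) = ((2:ℕ):ℝ) by norm_num, Real.rpow_natCast] at holder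
  norm_num at holder
  rw [integral_congr_ae hfsq, integral_congr_ae hgsq] at holder
  -- identify ∫ f g
  have hfg : (fun θ => f θ * g θ)
      =ᵐ[prior] fun θ => Real.sqrt (((x : ℝ) + 1) / ((x : ℝ) + 2)) * poissonPMF θ (x + 1) := by
    filter_upwards [hsupp] with θ hθ
    have h1 : f θ * g θ = Real.sqrt (poissonPMF θ x * poissonPMF θ (x + 2)) :=
      (Real.sqrt_mul (poissonPMF_nonneg hθ x) _).symm
    have h2 : poissonPMF θ x * poissonPMF θ (x + 2)
        = (((x : ℝ) + 1) / ((x : ℝ) + 2)) * poissonPMF θ (x + 1) ^ 2 := by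
      have := poissonPMF_key θ x
      have hx2 : (x : ℝ) + 2 ≠ 0 := by positivity
      field_simp
      linarith [this]
    rw [h1, h2, Real.sqrt_mul (by positivity), Real.sqrt_sq (poissonPMF_nonneg hθ (x + 1))]
  have hintB : ∫ θ, f θ * g θ ∂prior = Real.sqrt (((x : ℝ) + 1) / ((x : ℝ) + 2)) * B := by
    rw [integral_congr_ae hfg, integral_const_mul]
  rw [hintB] at holder
  -- holder : sqrt((x+1)/(x+2)) * B ≤ A^(1/2) * C^(1/2)
  have hAC : (A ^ ((1:ℝ)/2) * C ^ ((1:ℝ)/2)) ^ 2 = A * C := by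
    rw [mul_pow, ← Real.rpow_natCast (A ^ ((1:ℝ)/2)) 2, ← Real.rpow_natCast (C ^ ((1:ℝ)/2)) 2,
      ← Real.rpow_mul hx.le, ← Real.rpow_mul hCnn]
    norm_num
  have hkey : ((x : ℝ) + 1) * B ^ 2 ≤ ((x : ℝ) + 2) * (A * C) := by
    have hBnn : 0 ≤ B := hx1.le
    have hs : 0 ≤ Real.sqrt (((x : ℝ) + 1) / ((x : ℝ) + 2)) * B := by positivity
    have hsq := mul_self_le_mul_self hs holder
    have hsval : Real.sqrt (((x : ℝ) + 1) / ((x : ℝ) + 2)) ^ 2 = ((x : ℝ) + 1) / ((x : ℝ) + 2) :=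
      Real.sq_sqrt (by positivity)
    have hx2 : (0:ℝ) < (x : ℝ) + 2 := by positivity
    rw [← hA, ← hC] at hsq
    have h3 : (((x : ℝ) + 1) / ((x : ℝ) + 2)) * B ^ 2 ≤ A * C := by
      nlinarith [hsq, hsval, hAC]
    calc ((x : ℝ) + 1) * B ^ 2 = ((x : ℝ) + 2) * ((((x : ℝ) + 1) / ((x : ℝ) + 2)) * B ^ 2) := by
          field_simp
      _ ≤ ((x : ℝ) + 2) * (A * C) := by
          exact mul_le_mul_of_nonneg_left h3 hx2.le
  rw [div_le_div_iff₀ hx hx1]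
  nlinarith [hkey]
end

section
/- Let F be a convex class of functions f : ℤ≥0 → ℝ and let R̂(f) = (1/n) Σ_{i=1}^n [f(X_i)^2 − 2 X_i f(X_i − 1)] (with f(−1) := 0) for fixed data X_1, …, X_n ∈ ℤ≥0. If f̂ ∈ F minimizes R̂ over F, then for every h ∈ F, R̂(h) − R̂(f̂) ≥ (1/n) Σ_{i=1}^n (h(X_i) − f̂(X_i))^2. -/
open Finset

/-- Empirical risk `R̂(f) = (1/n) Σᵢ [f(Xᵢ)² − 2 Xᵢ f(Xᵢ−1)]`, with `f(−1) := 0`. -/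
noncomputable def empRisk (n : ℕ) (X : Fin n → ℕ) (f : ℕ → ℝ) : ℝ :=
  (1 / n : ℝ) * ∑ i : Fin n,
    (f (X i) ^ 2 - 2 * (X i : ℝ) * (if X i = 0 then 0 else f (X i - 1)))

/-- Basic inequality for the ERM over a convex function class: for every `h ∈ F`,
`R̂(h) − R̂(f̂) ≥ (1/n) Σᵢ (h(Xᵢ) − f̂(Xᵢ))²`. -/
theorem stmt_5 (n : ℕ) (hn : 0 < n) (X : Fin n → ℕ) (F : Set (ℕ → ℝ))
    (hconv : ∀ f ∈ F, ∀ g ∈ F, ∀ ε : ℝ, 0 ≤ ε → ε ≤ 1 →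
      (fun x => (1 - ε) * f x + ε * g x) ∈ F)
    (fhat : ℕ → ℝ) (hfhat : fhat ∈ F)
    (hmin : ∀ g ∈ F, empRisk n X fhat ≤ empRisk n X g)
    (h : ℕ → ℝ) (hh : h ∈ F) :
    (1 / n : ℝ) * ∑ i : Fin n, (h (X i) - fhat (X i)) ^ 2
      ≤ empRisk n X h - empRisk n X fhat := by
  set Q : ℝ := (1 / n : ℝ) * ∑ i : Fin n, (h (X i) - fhat (X i)) ^ 2 with hQdef
  set L : ℝ := (1 / n : ℝ) * ∑ i : Fin n,
      (2 * fhat (X i) * (h (X i) - fhat (X i))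
        - 2 * (X i : ℝ) * (if X i = 0 then 0 else (h (X i - 1) - fhat (X i - 1)))) with hLdef
  have hQ0 : 0 ≤ Q := by
    apply mul_nonneg
    · positivity
    · exact Finset.sum_nonneg fun i _ => sq_nonneg _
  have key : ∀ ε : ℝ, empRisk n X (fun x => (1 - ε) * fhat x + ε * h x)
      = empRisk n X fhat + ε * L + ε ^ 2 * Q := by
    intro ε
    have hterm : ∀ i : Fin n,
        (((1 - ε) * fhat (X i) + ε * h (X i)) ^ 2
          - 2 * (X i : ℝ) * (if X i = 0 then 0 else
              ((1 - ε) * fhat (X i - 1) + ε * h (X i - 1))))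
        = (fhat (X i) ^ 2 - 2 * (X i : ℝ) * (if X i = 0 then 0 else fhat (X i - 1)))
          + ε * (2 * fhat (X i) * (h (X i) - fhat (X i))
              - 2 * (X i : ℝ) * (if X i = 0 then 0 else (h (X i - 1) - fhat (X i - 1))))
          + ε ^ 2 * (h (X i) - fhat (X i)) ^ 2 := by
      intro i
      by_cases hi : X i = 0 <;> simp [hi] <;> ring
    simp only [empRisk]
    rw [Finset.sum_congr rfl fun i _ => hterm i]
    rw [Finset.sum_add_distrib, Finset.sum_add_distrib, ← Finset.mul_sum, ← Finset.mul_sum,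
      hLdef, hQdef]
    ring
  have hL0 : 0 ≤ L := by
    by_contra hL
    push_neg at hL
    set ε : ℝ := min 1 (-L / (2 * (Q + 1))) with hε
    have hQ1 : 0 < Q + 1 := by linarith
    have hεpos : 0 < ε := by
      apply lt_min one_pos
      exact div_pos (by linarith) (by linarith)
    have hεle : ε ≤ 1 := min_le_left _ _
    have hmem := hconv fhat hfhat h hh ε hεpos.le hεle
    have := hmin _ hmem
    rw [key ε] at this
    have hεQ : ε * Q ≤ -L / 2 := by
      calc ε * Q ≤ (-L / (2 * (Q + 1))) * (Q + 1) := by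
            apply mul_le_mul (min_le_right _ _) (by linarith) hQ0
            exact le_of_lt (div_pos (by linarith) (by linarith))
        _ = -L / 2 := by field_simp
    have : 0 ≤ ε * L + ε ^ 2 * Q := by linarith
    have hneg : ε * L + ε ^ 2 * Q < 0 := by
      have : ε * L + ε ^ 2 * Q = ε * (L + ε * Q) := by ring
      rw [this]
      apply mul_neg_of_pos_of_neg hεpos
      nlinarith
    linarith
  have h1 : empRisk n X h = empRisk n X fhat + L + Q := by
    have := key 1
    have heq : (fun x => (1 - (1:ℝ)) * fhat x + 1 * h x) = h := by
      funext x; ring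
    rw [heq] at this
    simpa using this
  rw [h1]
  linarith
end

section
/- Let N be a nonnegative integer, let ε_1, …, ε_N be i.i.d. Rademacher random variables (each ±1 with probability 1/2), and set S = Σ_{i=1}^N ε_i. Then for any b > 1, E[max{S − N/b, 0}] ≤ (1 − 1/b) / (e · D((1 + 1/b)/2 ‖ 1/2)), where D(p‖q) = p log(p/q) + (1−p) log((1−p)/(1−q)) is the binary KL divergence. -/
open Real Finset

/-- Binary KL divergence `D(p‖q)`. -/
noncomputable def klBin (p q : ℝ) : ℝ :=
  p * Real.log (p / q) + (1 - p) * Real.log ((1 - p) / (1 - q))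

/-- For `S` a sum of `N` i.i.d. Rademacher signs and `b > 1`,
`E[max{S − N/b, 0}] ≤ (1 − 1/b)/(e · D((1+1/b)/2 ‖ 1/2))`. -/
theorem stmt_6 (N : ℕ) (b : ℝ) (hb : 1 < b) :
    (1 / 2 ^ N : ℝ) * ∑ σ : Fin N → Bool,
        max ((∑ i : Fin N, (if σ i then (1 : ℝ) else -1)) - N / b) 0
      ≤ (1 - 1 / b) / (Real.exp 1 * klBin ((1 + 1 / b) / 2) (1 / 2)) := by
  have hb0 : (0:ℝ) < b := lt_trans one_pos hb
  set x : ℝ := 1 / b with hxdef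
  have hx0 : 0 < x := by positivity
  have hx1 : x < 1 := by rw [hxdef, div_lt_one hb0]; linarith
  have h1px : (0:ℝ) < 1 + x := by linarith
  have h1mx : (0:ℝ) < 1 - x := by linarith
  set L1 := Real.log (1 + x) with hL1
  set L2 := Real.log (1 - x) with hL2
  set t : ℝ := (L1 - L2) / 2 with htdef
  have hL : L2 ≤ L1 := by
    rw [hL1, hL2]
    exact Real.log_le_log h1mx (by linarith)
  have ht0 : 0 ≤ t := by rw [htdef]; linarith
  set D : ℝ := klBin ((1 + x) / 2) (1 / 2) with hDdef
  have hD_eq : D = ((1 + x) * L1 + (1 - x) * L2) / 2 := by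
    rw [hDdef, klBin,
      show ((1 + x) / 2) / (1/2 : ℝ) = 1 + x from by ring,
      show (1 - (1 + x)/2) / (1 - 1/2 : ℝ) = 1 - x from by ring, ← hL1, ← hL2]
    ring
  have hD_pos : 0 < D := by
    have h1 : Real.log ((1+x)⁻¹) < (1+x)⁻¹ - 1 := by
      apply Real.log_lt_sub_one_of_pos (by positivity)
      intro h
      have : (1:ℝ) + x = 1 := by
        field_simp at h; linarith
      linarith
    have h2 : Real.log ((1-x)⁻¹) < (1-x)⁻¹ - 1 := by
      apply Real.log_lt_sub_one_of_pos (by positivity)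
      intro h
      have : (1:ℝ) - x = 1 := by
        field_simp at h; linarith
      linarith
    rw [Real.log_inv, ← hL1] at h1
    rw [Real.log_inv, ← hL2] at h2
    have hi1 : (1+x) * (1+x)⁻¹ = 1 := mul_inv_cancel₀ (ne_of_gt h1px)
    have hi2 : (1-x) * (1-x)⁻¹ = 1 := mul_inv_cancel₀ (ne_of_gt h1mx)
    have k1 : x < (1+x) * L1 := by nlinarith [mul_lt_mul_of_pos_left h1 h1px]
    have k2 : -x < (1-x) * L2 := by nlinarith [mul_lt_mul_of_pos_left h2 h1mx]
    rw [hD_eq]; linarith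
  -- pointwise bound
  have hpt : ∀ σ : Fin N → Bool,
      max ((∑ i : Fin N, (if σ i then (1 : ℝ) else -1)) - N / b) 0
        ≤ (1-x) * N * Real.exp (t * ((∑ i : Fin N, (if σ i then (1 : ℝ) else -1)) - N * x)) := by
    intro σ
    set S := ∑ i : Fin N, (if σ i then (1 : ℝ) else -1) with hS
    have hSN : S ≤ N := by
      rw [hS]
      calc ∑ i : Fin N, (if σ i then (1 : ℝ) else -1)
          ≤ ∑ _i : Fin N, (1:ℝ) := Finset.sum_le_sum (by intro i _; split <;> norm_num)
        _ = N := by simp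
    have hNb : (N:ℝ)/b = N*x := by rw [hxdef]; ring
    rw [hNb]
    have hrhs0 : 0 ≤ (1-x) * (N:ℝ) * Real.exp (t * (S - N*x)) := by
      apply mul_nonneg (mul_nonneg h1mx.le (Nat.cast_nonneg N)) (Real.exp_nonneg _)
    rcases le_or_gt (S - N*x) 0 with h | h
    · rw [max_eq_right h]; exact hrhs0
    · rw [max_eq_left h.le]
      have h1 : S - N*x ≤ (1-x) * N := by nlinarith
      have h2 : 1 ≤ Real.exp (t * (S - N*x)) := Real.one_le_exp (mul_nonneg ht0 h.le)
      have h3 : 0 ≤ (1-x) * (N:ℝ) := mul_nonneg h1mx.le (Nat.cast_nonneg N)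
      calc S - N*x ≤ (1-x)*N := h1
        _ = (1-x)*N * 1 := by ring
        _ ≤ (1-x)*N * Real.exp (t * (S - N*x)) := by
            exact mul_le_mul_of_nonneg_left h2 h3
  -- moment generating function computation
  have hsum : ∑ σ : Fin N → Bool,
      Real.exp (t * ∑ i : Fin N, (if σ i then (1:ℝ) else -1))
      = (Real.exp t + Real.exp (-t))^N := by
    have hterm : ∀ σ : Fin N → Bool,
        Real.exp (t * ∑ i : Fin N, (if σ i then (1:ℝ) else -1))
          = ∏ i : Fin N, (if σ i then Real.exp t else Real.exp (-t)) := by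
      intro σ
      rw [Finset.mul_sum, Real.exp_sum]
      apply Finset.prod_congr rfl
      intro i _
      by_cases h : σ i <;> simp [h]
    simp_rw [hterm]
    rw [show Real.exp t + Real.exp (-t)
        = ∑ a : Bool, (if a then Real.exp t else Real.exp (-t)) from by simp,
      Fintype.sum_pow]
  -- value of the mgf at t
  have hmgf : Real.exp (-(t*x)) * ((Real.exp t + Real.exp (-t))/2) = Real.exp (-D) := by
    have he : Real.exp t = Real.exp (-t) * ((1+x)/(1-x)) := by
      rw [← Real.exp_log (show (0:ℝ) < (1+x)/(1-x) from by positivity), ← Real.exp_add]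
      congr 1
      rw [Real.log_div (ne_of_gt h1px) (ne_of_gt h1mx), ← hL1, ← hL2, htdef]
      ring
    have hc : Real.exp t + Real.exp (-t) = Real.exp (-t) * (2/(1-x)) := by
      rw [he]; field_simp; ring
    rw [hc, show Real.exp (-t) * (2/(1-x)) / 2 = Real.exp (-t) / (1-x) from by
      field_simp]
    rw [show Real.exp (-t) / (1-x) = Real.exp (-t) * (1-x)⁻¹ from by ring,
      ← Real.exp_log (show (0:ℝ) < (1-x)⁻¹ from by positivity), ← Real.exp_add,
      ← Real.exp_add]
    congr 1
    rw [Real.log_inv, ← hL2, htdef, hD_eq]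
    ring
  -- combine
  have hNbcast : ∀ s : ℝ, t * (s - N/b) = t * (s - N*x) := by
    intro s; rw [hxdef]; ring
  have step1 : (1 / 2 ^ N : ℝ) * ∑ σ : Fin N → Bool,
        max ((∑ i : Fin N, (if σ i then (1 : ℝ) else -1)) - N / b) 0
      ≤ (1 / 2 ^ N : ℝ) * ∑ σ : Fin N → Bool,
        (1-x) * N * Real.exp (t * ((∑ i : Fin N, (if σ i then (1:ℝ) else -1)) - N * x)) := by
    apply mul_le_mul_of_nonneg_left (Finset.sum_le_sum (fun σ _ => hpt σ)) (by positivity)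
  have step2 : (1 / 2 ^ N : ℝ) * ∑ σ : Fin N → Bool,
        (1-x) * N * Real.exp (t * ((∑ i : Fin N, (if σ i then (1:ℝ) else -1)) - N * x))
      = (1-x) * N * Real.exp (-((N:ℝ)*D)) := by
    have hsplit : ∀ σ : Fin N → Bool,
        (1-x) * (N:ℝ) * Real.exp (t * ((∑ i : Fin N, (if σ i then (1:ℝ) else -1)) - N * x))
        = ((1-x) * N * Real.exp (-(t * (N * x))))
            * Real.exp (t * ∑ i : Fin N, (if σ i then (1:ℝ) else -1)) := by
      intro σ
      rw [mul_assoc ((1-x) * (N:ℝ)), ← Real.exp_add]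
      congr 2
      ring
    simp_rw [hsplit]
    rw [← Finset.mul_sum, hsum]
    have : Real.exp (-(t * ((N:ℝ) * x))) * (Real.exp t + Real.exp (-t))^N
        = 2^N * (Real.exp (-(t*x)) * ((Real.exp t + Real.exp (-t))/2))^N := by
      rw [show -(t * ((N:ℝ) * x)) = (N:ℝ) * (-(t*x)) from by ring,
        Real.exp_nat_mul, mul_pow, div_pow]
      field_simp
    rw [show (1 / 2 ^ N : ℝ) * ((1-x) * N * Real.exp (-(t * (N * x)))
          * (Real.exp t + Real.exp (-t))^N)
        = (1-x) * N * ((1 / 2 ^ N : ℝ)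
          * (Real.exp (-(t * ((N:ℝ) * x))) * (Real.exp t + Real.exp (-t))^N)) from by ring,
      this, hmgf, ← Real.exp_nat_mul]
    rw [show ((N:ℝ)) * (-D) = -((N:ℝ)*D) from by ring]
    field_simp
  have step3 : (1-x) * (N:ℝ) * Real.exp (-((N:ℝ)*D)) ≤ (1-x) * (1/(Real.exp 1 * D)) := by
    rw [mul_assoc]
    apply mul_le_mul_of_nonneg_left _ h1mx.le
    set z := (N:ℝ) * D with hz
    have hz0 : 0 ≤ z := mul_nonneg (Nat.cast_nonneg N) hD_pos.le
    have hze : z ≤ Real.exp (z - 1) := by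
      have := Real.add_one_le_exp (z - 1); linarith
    rw [le_div_iff₀ (by positivity)]
    have e1 : (N:ℝ) * Real.exp (-z) * (Real.exp 1 * D) = z * Real.exp (-z) * Real.exp 1 := by
      rw [hz]; ring
    rw [show -((N:ℝ)*D) = -z from by rw [hz], e1]
    calc z * Real.exp (-z) * Real.exp 1
        ≤ Real.exp (z-1) * Real.exp (-z) * Real.exp 1 := by
          apply mul_le_mul_of_nonneg_right
            (mul_le_mul_of_nonneg_right hze (Real.exp_nonneg _)) (Real.exp_nonneg _)
      _ = 1 := by
          rw [← Real.exp_add, ← Real.exp_add, show z - 1 + -z + 1 = 0 from by ring,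
            Real.exp_zero]
  calc (1 / 2 ^ N : ℝ) * ∑ σ : Fin N → Bool,
        max ((∑ i : Fin N, (if σ i then (1 : ℝ) else -1)) - N / b) 0
      ≤ (1-x) * N * Real.exp (-((N:ℝ)*D)) := step1.trans (le_of_eq step2)
    _ ≤ (1-x) * (1/(Real.exp 1 * D)) := step3
    _ = (1 - 1/b) / (Real.exp 1 * klBin ((1 + 1/b)/2) (1/2)) := by
        rw [hDdef, hxdef]; ring
end

section
/- Let c > 0 and let ε_1, …, ε_n be i.i.d. Rademacher random variables. Define L_c(ε) = max_{0 ≤ j ≤ n} (Σ_{i=1}^j ε_i − c·j). Then E[L_c(ε)] ≤ 1 + (1 − exp(−D((c+1)/2 ‖ 1/2)))^{−2}, where D(·‖·) is the binary KL divergence. (If c ≥ 1 the statement is interpreted with D((c+1)/2 ‖ 1/2) replaced by a value making the bound trivially valid, so one may assume 0 < c < 1.) -/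
open Real Finset

private lemma count_lt_aux (n j : ℕ) : ∑ i : Fin n, (if (i:ℕ) < j then (1:ℝ) else 0) ≤ j := by
  rw [Fin.sum_univ_eq_sum_range (fun i => if i < j then (1:ℝ) else 0), Finset.sum_boole]
  have : ((range n).filter (· < j)).card ≤ j := by
    refine le_trans (Finset.card_le_card ?_) (le_of_eq (Finset.card_range j))
    intro x hx; simp at hx ⊢; exact hx.2
  exact_mod_cast this

private lemma prod_ite_aux (j n : ℕ) (h : j ≤ n) (A : ℝ) :
    ∏ i : Fin n, (if (i:ℕ) < j then A else 2) = A^j * 2^(n-j) := by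
  rw [Fin.prod_univ_eq_prod_range (fun k => if k < j then A else 2), ← Finset.prod_range_mul_prod_Ico _ h]
  rw [Finset.prod_congr rfl (fun i hi => if_pos (Finset.mem_range.1 hi)),
      Finset.prod_congr rfl (fun i hi => if_neg (by simpa using (Finset.mem_Ico.1 hi).1.not_gt)),
      Finset.prod_const, Finset.prod_const, Finset.card_range, Nat.card_Ico]

private lemma sum_prod_aux (n : ℕ) (g : Fin n → Bool → ℝ) :
    ∑ σ : Fin n → Bool, ∏ i, g i (σ i) = ∏ i, (g i true + g i false) := by
  calc ∑ σ : Fin n → Bool, ∏ i, g i (σ i)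
      = ∑ σ ∈ Fintype.piFinset (fun _ : Fin n => (Finset.univ : Finset Bool)), ∏ i, g i (σ i) := by
        rw [Fintype.piFinset_univ]
    _ = ∏ i, ∑ b, g i b := (Finset.prod_univ_sum _ _).symm
    _ = ∏ i, (g i true + g i false) := by
        exact Finset.prod_congr rfl fun i _ => Fintype.sum_bool _

/-- For i.i.d. Rademacher signs `ε₁,…,εₙ` and `0 < c < 1`, the expected maximal
penalized partial sum `L_c(ε) = max_{0≤j≤n} (Σ_{i≤j} εᵢ − c·j)` satisfies
`E[L_c(ε)] ≤ 1 + (1 − exp(−D((c+1)/2 ‖ 1/2)))⁻²`. -/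
theorem stmt_7 (n : ℕ) (c : ℝ) (hc : 0 < c) (hc1 : c < 1) :
    (1 / 2 ^ n : ℝ) * ∑ σ : Fin n → Bool,
        (Finset.range (n + 1)).sup' (by simp) (fun j =>
          (∑ i : Fin n, if (i : ℕ) < j then (if σ i then (1:ℝ) else -1) else 0)
            - c * j)
      ≤ 1 + (1 - Real.exp (-klBin ((c + 1) / 2) (1 / 2)))⁻¹ ^ 2 := by
  set p : ℝ := (c + 1) / 2 with hp_def
  have hp0 : 0 < p := by rw [hp_def]; linarith
  have hp1 : p < 1 := by rw [hp_def]; linarith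
  have h1p0 : 0 < 1 - p := by linarith
  have hcp : c = 2*p - 1 := by rw [hp_def]; ring
  set lp := Real.log p with hlp
  set lq := Real.log (1 - p) with hlq
  have hlplq : lq < lp := Real.log_lt_log h1p0 (by linarith)
  set lam : ℝ := (lp - lq)/2 with hlam
  have hlam0 : 0 < lam := by rw [hlam]; linarith
  have hkl : klBin p (1/2) = Real.log 2 + (p * lp + (1 - p) * lq) := by
    unfold klBin
    rw [show p / (1/2:ℝ) = 2 * p by ring, show (1 - p) / (1 - 1/2:ℝ) = 2*(1-p) by ring,
        Real.log_mul two_ne_zero (ne_of_gt hp0), Real.log_mul two_ne_zero (ne_of_gt h1p0)]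
    ring
  have hklpos : 0 < klBin p (1/2) := by
    have hconc := strictConcaveOn_log_Ioi.2 (Set.mem_Ioi.2 (by positivity : (0:ℝ) < 1/p))
      (Set.mem_Ioi.2 (by positivity : (0:ℝ) < 1/(1-p)))
      (by
        intro hxy
        have : (1:ℝ) - p = p := by
          field_simp at hxy
          linarith
        have hphalf : 1/2 < p := by rw [hp_def]; linarith
        linarith)
      hp0 h1p0 (by ring)
    have hconv : p • (1/p) + (1 - p) • (1/(1-p)) = (2:ℝ) := by
      field_simp
      norm_num
      rw [mul_inv_cancel₀ (ne_of_gt hp0), mul_inv_cancel₀ (ne_of_gt h1p0)]; norm_num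
    rw [hconv] at hconc
    rw [smul_eq_mul, smul_eq_mul, Real.log_div one_ne_zero (ne_of_gt hp0),
        Real.log_div one_ne_zero (ne_of_gt h1p0), Real.log_one] at hconc
    rw [hkl]
    rw [← hlp, ← hlq] at hconc
    linarith
  set q : ℝ := Real.exp (-klBin p (1/2)) with hq
  have hq0 : 0 < q := Real.exp_pos _
  have hq1 : q < 1 := by rw [hq, Real.exp_lt_one_iff]; linarith
  set E : ℝ := Real.exp (p*lp + (1-p)*lq) with hE
  have hE0 : 0 < E := Real.exp_pos _
  have t1 : Real.exp (-(lam*c)) * Real.exp lam * E = p := by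
    rw [hE, ← Real.exp_add, ← Real.exp_add,
      show -(lam*c) + lam + (p*lp + (1-p)*lq) = lp by rw [hlam, hcp]; ring]
    exact Real.exp_log hp0
  have t2 : Real.exp (-(lam*c)) * Real.exp (-lam) * E = 1 - p := by
    rw [hE, ← Real.exp_add, ← Real.exp_add,
      show -(lam*c) + -lam + (p*lp + (1-p)*lq) = lq by rw [hlam, hcp]; ring]
    exact Real.exp_log h1p0
  have tq : q * E = 1/2 := by
    rw [hq, hE, ← Real.exp_add, hkl,
      show -(Real.log 2 + (p*lp+(1-p)*lq)) + (p*lp+(1-p)*lq) = -Real.log 2 by ring,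
      Real.exp_neg, Real.exp_log two_pos]
    norm_num
  have key : Real.exp (-(lam*c)) * (Real.exp lam + Real.exp (-lam)) / 2 = q := by
    have h : (Real.exp (-(lam*c)) * (Real.exp lam + Real.exp (-lam)) / 2) * E = q * E := by
      rw [tq]
      have h2 : (Real.exp (-(lam*c)) * (Real.exp lam + Real.exp (-lam)) / 2) * E
          = (Real.exp (-(lam*c)) * Real.exp lam * E + Real.exp (-(lam*c)) * Real.exp (-lam) * E)/2 := by
        ring
      rw [h2, t1, t2]; ring
    exact mul_right_cancel₀ (ne_of_gt hE0) h
  clear_value p lp lq lam q E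
  -- abbreviation for the partial sums
  set S : ℕ → (Fin n → Bool) → ℝ :=
    fun j σ => ∑ i : Fin n, if (i : ℕ) < j then (if σ i then (1:ℝ) else -1) else 0 with hS
  -- Step 1: pointwise bound
  have step1 : ∀ σ : Fin n → Bool,
      (Finset.range (n + 1)).sup' (by simp) (fun j => S j σ - c * j)
        ≤ ∑ j ∈ range (n+1), (j:ℝ) * Real.exp (lam * (S j σ - c * j)) := by
    intro σ
    apply Finset.sup'_le
    intro j hj
    refine le_trans ?_ (Finset.single_le_sum (f := fun k : ℕ => (k:ℝ) * Real.exp (lam * (S k σ - c * (k:ℝ))))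
      (fun k _ => by positivity) hj)
    show S j σ - c * (j:ℝ) ≤ (j:ℝ) * Real.exp (lam * (S j σ - c * (j:ℝ)))
    by_cases ha : S j σ - c * j ≤ 0
    · have : (0:ℝ) ≤ (j:ℝ) * Real.exp (lam * (S j σ - c * j)) := by positivity
      linarith
    · push_neg at ha
      have hSj : S j σ ≤ j := by
        refine le_trans (Finset.sum_le_sum fun i _ => ?_) (count_lt_aux n j)
        by_cases hij : (i:ℕ) < j
        · simp only [if_pos hij]
          by_cases hσ : σ i <;> simp [hσ]
        · simp [hij]
      have hexp : 1 ≤ Real.exp (lam * (S j σ - c * j)) := by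
        apply Real.one_le_exp
        positivity
      have hj0 : (0:ℝ) ≤ (j:ℝ) := Nat.cast_nonneg j
      have hcj : 0 ≤ c * j := by positivity
      nlinarith
  -- Step 2: exact computation of each expectation term
  have step2 : ∀ j ∈ range (n+1),
      (1 / 2 ^ n : ℝ) * ∑ σ : Fin n → Bool, (j:ℝ) * Real.exp (lam * (S j σ - c * j))
        = (j:ℝ) * q ^ j := by
    intro j hj
    have hjn : j ≤ n := Nat.lt_succ_iff.1 (Finset.mem_range.1 hj)
    have hmgf : ∑ σ : Fin n → Bool, Real.exp (lam * S j σ)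
        = (Real.exp lam + Real.exp (-lam))^j * 2^(n-j) := by
      have hrw : ∀ σ : Fin n → Bool, Real.exp (lam * S j σ)
          = ∏ i : Fin n, Real.exp (lam * (if (i:ℕ) < j then (if σ i then (1:ℝ) else -1) else 0)) := by
        intro σ
        rw [hS]
        rw [Finset.mul_sum, Real.exp_sum]
      rw [Finset.sum_congr rfl fun σ _ => hrw σ]
      rw [sum_prod_aux n (fun i b => Real.exp (lam * (if (i:ℕ) < j then (if b then (1:ℝ) else -1) else 0)))]
      rw [← prod_ite_aux j n hjn (Real.exp lam + Real.exp (-lam))]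
      refine Finset.prod_congr rfl fun i _ => ?_
      by_cases hij : (i:ℕ) < j
      · simp [hij, mul_neg_one]
      · simp only [hij, if_false, mul_zero, Real.exp_zero]
        norm_num
    have hsplit : ∀ σ : Fin n → Bool, Real.exp (lam * (S j σ - c * j))
        = Real.exp (lam * S j σ) * (Real.exp (-(lam*c)))^j := by
      intro σ
      rw [← Real.exp_nat_mul, ← Real.exp_add]
      congr 1
      ring
    have h2n : (2:ℝ)^n = 2^j * 2^(n-j) := by
      rw [← pow_add]
      congr 1
      omega
    have hKA : (Real.exp (-(lam*c)) * (Real.exp lam + Real.exp (-lam)) / 2)^j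
        = Real.exp (-(lam*c))^j * (Real.exp lam + Real.exp (-lam))^j * ((2:ℝ)^j)⁻¹ := by
      rw [div_eq_mul_inv, mul_pow, mul_pow, inv_pow]
    calc (1 / 2 ^ n : ℝ) * ∑ σ : Fin n → Bool, (j:ℝ) * Real.exp (lam * (S j σ - c * j))
        = (1 / 2 ^ n : ℝ) * ((j:ℝ) * (Real.exp (-(lam*c))^j * ∑ σ : Fin n → Bool, Real.exp (lam * S j σ))) := by
          congr 1
          simp only [hsplit]
          rw [Finset.mul_sum, Finset.mul_sum]
          exact Finset.sum_congr rfl fun σ _ => by ring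
      _ = (j:ℝ) * ((Real.exp (-(lam*c)) * (Real.exp lam + Real.exp (-lam)) / 2)^j) := by
          rw [hmgf, hKA, h2n]
          have h2j : ((2:ℝ)^j) ≠ 0 := by positivity
          have h2nj : ((2:ℝ)^(n-j)) ≠ 0 := by positivity
          field_simp
      _ = (j:ℝ) * q ^ j := by rw [key]
  -- Step 3: sum the series
  have hgeom : HasSum (fun j : ℕ => (j:ℝ) * q ^ j) (q / (1 - q)^2) :=
    hasSum_coe_mul_geometric_of_norm_lt_one (by rw [Real.norm_eq_abs, abs_of_pos hq0]; exact hq1)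
  have hsum_le : ∑ j ∈ range (n+1), (j:ℝ) * q ^ j ≤ q / (1 - q)^2 :=
    sum_le_hasSum _ (fun k _ => by positivity) hgeom
  have h1q : 0 < 1 - q := by linarith
  calc (1 / 2 ^ n : ℝ) * ∑ σ : Fin n → Bool,
        (Finset.range (n + 1)).sup' (by simp) (fun j => S j σ - c * j)
      ≤ (1 / 2 ^ n : ℝ) * ∑ σ : Fin n → Bool,
          ∑ j ∈ range (n+1), (j:ℝ) * Real.exp (lam * (S j σ - c * j)) := by
        apply mul_le_mul_of_nonneg_left (Finset.sum_le_sum fun σ _ => step1 σ) (by positivity)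
    _ = ∑ j ∈ range (n+1), (1 / 2 ^ n : ℝ) * ∑ σ : Fin n → Bool, (j:ℝ) * Real.exp (lam * (S j σ - c * j)) := by
        rw [Finset.sum_comm, Finset.mul_sum]
    _ = ∑ j ∈ range (n+1), (j:ℝ) * q ^ j := Finset.sum_congr rfl step2
    _ ≤ q / (1 - q)^2 := hsum_le
    _ ≤ 1 + (1 - q)⁻¹ ^ 2 := by
        rw [inv_pow]
        have h2 : q / (1-q)^2 ≤ 1 / (1-q)^2 := by
          gcongr
        rw [one_div] at h2
        linarith
end

section
/- Let v_1, …, v_n ≥ 0 and w_1, …, w_n ≥ 0 with v_n > 0 and max{v_i, w_i} > 0 for each i. Let f̂ minimize G(f) = Σ_{i=1}^n [v_i f(i)^2 − 2 w_i f(i)] over nondecreasing functions f : {1,…,n} → ℝ. If [1, j] is the maximal initial interval on which f̂ is constant, then f̂(1) = (Σ_{i=1}^{j} w_i)/(Σ_{i=1}^{j} v_i), and moreover (Σ_{i=1}^{j} w_i)/(Σ_{i=1}^{j} v_i) ≤ (Σ_{i=1}^{m} w_i)/(Σ_{i=1}^{m} v_i) for all 1 ≤ m ≤ n, with strict inequality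 for m > j (interpreting a ratio with zero denominator as +∞). -/
open Finset

/-- First-order condition from one-sided (negative) perturbations. -/
lemma stmt_16_aux_neg (A B ε : ℝ) (hB : 0 ≤ B) (hε : 0 < ε)
    (h : ∀ t : ℝ, -ε < t → t < 0 → 0 ≤ t * (2 * A + t * B)) : A ≤ 0 := by
  by_contra hA
  push_neg at hA
  set m : ℝ := min (ε / 2) (A / (B + 1)) with hm
  have hmpos : 0 < m := lt_min (by linarith) (div_pos hA (by linarith))
  have h1 : -ε < -m := by
    have := min_le_left (ε / 2) (A / (B + 1))
    simp only [hm] at *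
    linarith
  have h2 : (-m : ℝ) < 0 := by linarith
  have h3 := h (-m) h1 h2
  have h4 : m * (B + 1) ≤ A :=
    (le_div_iff₀ (by linarith : (0:ℝ) < B + 1)).mp (min_le_right _ _)
  nlinarith [mul_pos hmpos hA, sq_nonneg m, mul_pos hmpos hmpos]

/-- First-order condition from one-sided (positive) perturbations. -/
lemma stmt_16_aux_pos (A B ε : ℝ) (hB : 0 ≤ B) (hε : 0 < ε)
    (h : ∀ t : ℝ, 0 < t → t < ε → 0 ≤ t * (2 * A + t * B)) : 0 ≤ A := by
  have := stmt_16_aux_neg (-A) B ε hB hε (fun t h1 h2 => by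
    have := h (-t) (by linarith) (by linarith)
    nlinarith)
  linarith

/-- Pool-adjacent-violators characterization of the first constancy block of the
weighted isotonic minimizer: its value is the minimal prefix ratio `(Σw)/(Σv)`,
with strict inequality beyond the block (ratios with zero denominator read as `+∞`,
expressed here in cross-multiplied form). -/
theorem stmt_16 (n : ℕ) (hn : 0 < n) (v w : Fin n → ℝ)
    (hv : ∀ i, 0 ≤ v i) (hw : ∀ i, 0 ≤ w i)
    (hvn : 0 < v ⟨n - 1, by omega⟩) (hvw : ∀ i, 0 < max (v i) (w i))
    (fhat : Fin n → ℝ) (hmono : Monotone fhat)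
    (hmin : ∀ g : Fin n → ℝ, Monotone g →
      (∑ i, (v i * fhat i ^ 2 - 2 * w i * fhat i))
        ≤ ∑ i, (v i * g i ^ 2 - 2 * w i * g i))
    (j : Fin n) (hconst : ∀ i ≤ j, fhat i = fhat ⟨0, hn⟩)
    (hmaximal : ∀ i, j < i → fhat ⟨0, hn⟩ < fhat i) :
    0 < (∑ i ∈ Finset.Iic j, v i) ∧
    fhat ⟨0, hn⟩ = (∑ i ∈ Finset.Iic j, w i) / (∑ i ∈ Finset.Iic j, v i) ∧
    (∀ m : Fin n,
      (∑ i ∈ Finset.Iic j, w i) * (∑ i ∈ Finset.Iic m, v i)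
        ≤ (∑ i ∈ Finset.Iic m, w i) * (∑ i ∈ Finset.Iic j, v i)) ∧
    (∀ m : Fin n, j < m →
      (∑ i ∈ Finset.Iic j, w i) * (∑ i ∈ Finset.Iic m, v i)
        < (∑ i ∈ Finset.Iic m, w i) * (∑ i ∈ Finset.Iic j, v i)) := by
  set c : ℝ := fhat ⟨0, hn⟩ with hc
  have hcle : ∀ i, c ≤ fhat i := fun i => hmono (by simp [Fin.le_def])
  -- key perturbation inequality for any admissible perturbation
  have key : ∀ (S : Finset (Fin n)) (t : ℝ),
      Monotone (fun i => fhat i + if i ∈ S then t else 0) →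
      0 ≤ t * (2 * ∑ i ∈ S, (v i * fhat i - w i) + t * ∑ i ∈ S, v i) := by
    intro S t hg
    have h := hmin _ hg
    have step : ∑ i ∈ S, (t * (2 * (v i * fhat i - w i) + t * v i))
        = t * (2 * ∑ i ∈ S, (v i * fhat i - w i) + t * ∑ i ∈ S, v i) := by
      rw [Finset.mul_sum, Finset.mul_sum] at *
      rw [mul_add, Finset.mul_sum, Finset.mul_sum, ← Finset.sum_add_distrib]
      exact Finset.sum_congr rfl fun i _ => by ring
    have expand : ∑ i, (v i * (fhat i + if i ∈ S then t else 0) ^ 2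
          - 2 * w i * (fhat i + if i ∈ S then t else 0))
        = ∑ i, (v i * fhat i ^ 2 - 2 * w i * fhat i)
          + ∑ i ∈ S, (t * (2 * (v i * fhat i - w i) + t * v i)) := by
      have : ∀ i ∈ Finset.univ, (v i * (fhat i + if i ∈ S then t else 0) ^ 2
            - 2 * w i * (fhat i + if i ∈ S then t else 0))
          = (v i * fhat i ^ 2 - 2 * w i * fhat i)
            + (if i ∈ S then t * (2 * (v i * fhat i - w i) + t * v i) else 0) := by
        intro i _
        split <;> ring
      rw [Finset.sum_congr rfl this, Finset.sum_add_distrib]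
      congr 1
      rw [Finset.sum_ite_mem, Finset.univ_inter]
    rw [expand, step] at h
    linarith
  -- negative perturbations on any prefix are admissible
  have mono_le : ∀ (m : Fin n) (t : ℝ), t ≤ 0 →
      Monotone (fun i => fhat i + if i ∈ Finset.Iic m then t else 0) := by
    intro m t ht a b hab
    dsimp only
    by_cases ha : a ∈ Finset.Iic m <;> by_cases hb : b ∈ Finset.Iic m
    · simp only [ha, hb, if_pos]
      exact add_le_add_left (hmono hab) t
    · simp only [ha, if_pos, hb, if_neg, not_false_iff]
      have := hmono hab; linarith
    · exact absurd (Finset.mem_Iic.mpr (le_trans hab (Finset.mem_Iic.mp hb))) ha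
    · simp only [ha, hb, if_neg, not_false_iff]
      simpa using hmono hab
  -- step 1 : A m ≤ 0 for every prefix
  have step1 : ∀ m : Fin n, ∑ i ∈ Finset.Iic m, (v i * fhat i - w i) ≤ 0 := by
    intro m
    refine stmt_16_aux_neg _ (∑ i ∈ Finset.Iic m, v i) 1
      (Finset.sum_nonneg fun i _ => hv i) one_pos ?_
    intro t _ ht2
    exact key _ t (mono_le m t ht2.le)
  -- step 2 : 0 ≤ A j  (positive perturbations on the block)
  have step2 : 0 ≤ ∑ i ∈ Finset.Iic j, (v i * fhat i - w i) := by
    by_cases hj : (j : ℕ) + 1 < n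
    · set j1 : Fin n := ⟨(j : ℕ) + 1, hj⟩ with hj1
      have hjlt : j < j1 := by simp [Fin.lt_def, hj1]
      have hgap : 0 < fhat j1 - c := by have := hmaximal j1 hjlt; linarith
      refine stmt_16_aux_pos _ (∑ i ∈ Finset.Iic j, v i) (fhat j1 - c)
        (Finset.sum_nonneg fun i _ => hv i) hgap ?_
      intro t ht1 ht2
      refine key _ t ?_
      intro a b hab
      dsimp only
      by_cases ha : a ∈ Finset.Iic j <;> by_cases hb : b ∈ Finset.Iic j
      · simp only [ha, hb, if_pos]
        exact add_le_add_left (hmono hab) t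
      · simp only [ha, if_pos, hb, if_neg, not_false_iff]
        have hac : fhat a = c := hconst a (Finset.mem_Iic.mp ha)
        have hb' : j < b := lt_of_not_ge (fun h => hb (Finset.mem_Iic.mpr h))
        have hj1b : j1 ≤ b := by
          rw [Fin.le_def]
          exact Nat.succ_le_of_lt (Fin.lt_def.mp hb')
        have := hmono hj1b
        rw [hac]
        linarith
      · exact absurd (Finset.mem_Iic.mpr (le_trans hab (Finset.mem_Iic.mp hb))) ha
      · simp only [ha, hb, if_neg, not_false_iff]
        simpa using hmono hab
    · -- j is the last index : Iic j = univ, any positive shift is fine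
      have hall : ∀ i : Fin n, i ∈ Finset.Iic j := by
        intro i
        refine Finset.mem_Iic.mpr ?_
        rw [Fin.le_def]
        omega
      refine stmt_16_aux_pos _ (∑ i ∈ Finset.Iic j, v i) 1
        (Finset.sum_nonneg fun i _ => hv i) one_pos ?_
      intro t ht1 _
      refine key _ t ?_
      intro a b hab
      dsimp only
      simp only [hall a, hall b, if_pos]
      exact add_le_add_left (hmono hab) t
  -- the block sum identity : A j = c * Vj - Wj
  have hblock : ∑ i ∈ Finset.Iic j, (v i * fhat i - w i)
      = c * (∑ i ∈ Finset.Iic j, v i) - ∑ i ∈ Finset.Iic j, w i := by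
    rw [Finset.mul_sum, ← Finset.sum_sub_distrib]
    exact Finset.sum_congr rfl fun i hi => by
      rw [hconst i (Finset.mem_Iic.mp hi)]; ring
  have hAj : c * (∑ i ∈ Finset.Iic j, v i) = ∑ i ∈ Finset.Iic j, w i := by
    have h1 := step1 j
    rw [hblock] at h1 step2
    linarith
  -- Vj > 0
  have hVj : 0 < ∑ i ∈ Finset.Iic j, v i := by
    rcases (Finset.sum_nonneg fun i (_ : i ∈ Finset.Iic j) => hv i).lt_or_eq with h | h
    · exact h
    · exfalso
      have hv0 : ∀ i ∈ Finset.Iic j, v i = 0 :=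
        (Finset.sum_eq_zero_iff_of_nonneg fun i _ => hv i).mp h.symm
      have hW0 : ∑ i ∈ Finset.Iic j, w i = 0 := by rw [← hAj, ← h]; ring
      have hw0 : ∀ i ∈ Finset.Iic j, w i = 0 :=
        (Finset.sum_eq_zero_iff_of_nonneg fun i _ => hw i).mp hW0
      have h0mem : (⟨0, hn⟩ : Fin n) ∈ Finset.Iic j :=
        Finset.mem_Iic.mpr (by simp [Fin.le_def])
      have := hvw ⟨0, hn⟩
      rw [hv0 _ h0mem, hw0 _ h0mem] at this
      simp at this
  -- prefix domination : c * Vm ≤ Wm for all m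
  have hdom : ∀ m : Fin n,
      c * (∑ i ∈ Finset.Iic m, v i) ≤ ∑ i ∈ Finset.Iic m, w i := by
    intro m
    have h1 := step1 m
    rw [Finset.sum_sub_distrib] at h1
    have h2 : c * (∑ i ∈ Finset.Iic m, v i) ≤ ∑ i ∈ Finset.Iic m, v i * fhat i := by
      rw [Finset.mul_sum]
      exact Finset.sum_le_sum fun i _ => by
        have := mul_le_mul_of_nonneg_left (hcle i) (hv i); linarith [this]
    linarith
  refine ⟨hVj, ?_, ?_, ?_⟩
  · field_simp
    linarith [hAj]
  · intro m
    rw [← hAj]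
    nlinarith [mul_le_mul_of_nonneg_right (hdom m) hVj.le]
  · -- strict inequality beyond the block
    intro m hjm
    have hU : Finset.Iic j ∪ Finset.Ioc j m = Finset.Iic m := by
      have hjm' : (j : ℕ) < (m : ℕ) := hjm
      ext a
      simp only [Finset.mem_union, Finset.mem_Iic, Finset.mem_Ioc, Fin.le_def, Fin.lt_def]
      omega
    have hdisj : Disjoint (Finset.Iic j) (Finset.Ioc j m) := by
      rw [Finset.disjoint_left]
      intro a ha hb
      exact absurd (Finset.mem_Iic.mp ha) (not_le.mpr (Finset.mem_Ioc.mp hb).1)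
    have hsplitV : ∑ i ∈ Finset.Iic m, v i
        = (∑ i ∈ Finset.Iic j, v i) + ∑ i ∈ Finset.Ioc j m, v i := by
      rw [← hU, Finset.sum_union hdisj]
    have hsplitW : ∑ i ∈ Finset.Iic m, w i
        = (∑ i ∈ Finset.Iic j, w i) + ∑ i ∈ Finset.Ioc j m, w i := by
      rw [← hU, Finset.sum_union hdisj]
    have hmmem : m ∈ Finset.Ioc j m := Finset.mem_Ioc.mpr ⟨hjm, le_refl m⟩
    -- key strict claim : c * Vm < Wm
    have hstrict : c * (∑ i ∈ Finset.Iic m, v i) < ∑ i ∈ Finset.Iic m, w i := by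
      by_cases hcase : ∀ i ∈ Finset.Ioc j m, v i = 0
      · have hVIoc : ∑ i ∈ Finset.Ioc j m, v i = 0 := Finset.sum_eq_zero hcase
        have hwm : 0 < w m := by
          have := hvw m
          rw [hcase m hmmem] at this
          simpa [max_eq_right (hw m)] using this
        have hwle : w m ≤ ∑ i ∈ Finset.Ioc j m, w i :=
          Finset.single_le_sum (fun i _ => hw i) hmmem
        rw [hsplitV, hsplitW, hVIoc]
        have := hAj
        linarith
      · push_neg at hcase
        obtain ⟨i0, hi0mem, hi0⟩ := hcase
        have hi0pos : 0 < v i0 := lt_of_le_of_ne (hv i0) (Ne.symm hi0)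
        have hfi0 : c < fhat i0 := hmaximal i0 (Finset.mem_Ioc.mp hi0mem).1
        have hIoc : ∑ i ∈ Finset.Ioc j m, c * v i
            < ∑ i ∈ Finset.Ioc j m, v i * fhat i := by
          refine Finset.sum_lt_sum (fun i _ => ?_) ⟨i0, hi0mem, ?_⟩
          · have := mul_le_mul_of_nonneg_left (hcle i) (hv i); linarith
          · have := mul_lt_mul_of_pos_left hfi0 hi0pos; linarith
        have h1 := step1 m
        rw [Finset.sum_sub_distrib] at h1
        have hvfsplit : ∑ i ∈ Finset.Iic m, v i * fhat i
            = (∑ i ∈ Finset.Iic j, v i * fhat i)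
              + ∑ i ∈ Finset.Ioc j m, v i * fhat i := by
          rw [← hU, Finset.sum_union hdisj]
        have hvfj : ∑ i ∈ Finset.Iic j, v i * fhat i
            = c * ∑ i ∈ Finset.Iic j, v i := by
          rw [Finset.mul_sum]
          exact Finset.sum_congr rfl fun i hi => by
            rw [hconst i (Finset.mem_Iic.mp hi)]; ring
        have hcV : c * (∑ i ∈ Finset.Iic m, v i)
            = c * (∑ i ∈ Finset.Iic j, v i) + ∑ i ∈ Finset.Ioc j m, c * v i := by
          rw [hsplitV, mul_add]
          congr 1
          exact Finset.mul_sum _ _ _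
        rw [hcV]
        calc c * (∑ i ∈ Finset.Iic j, v i) + ∑ i ∈ Finset.Ioc j m, c * v i
            < c * (∑ i ∈ Finset.Iic j, v i) + ∑ i ∈ Finset.Ioc j m, v i * fhat i := by
              linarith
          _ = ∑ i ∈ Finset.Iic m, v i * fhat i := by rw [hvfsplit, hvfj]
          _ ≤ ∑ i ∈ Finset.Iic m, w i := by linarith
    rw [← hAj]
    nlinarith [mul_lt_mul_of_pos_right hstrict hVj]
end

section
/- Let π be a prior on ℝ≥0^d whose coordinates, given θ, generate X with independent Poisson coordinates X_j ~ Poi(θ_j). Let p_π(x) = ∫ Π_{j=1}^d e^{−θ_j} θ_j^{x_j}/x_j! dπ(θ) and f*_i(x) = (x_i + 1) p_π(x + e_i)/p_π(x) be the i-th coordinate of the Bayes estimator (defined where p_π(x) > 0). Then f*_i is coordinatewise monotone in the i-th coordinate: f*_i(x) ≤ f*_i(x + e_i) for all x ∈ ℤ≥0^d with p_π(x), p_π(x+e_i) > 0. -/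
open Real MeasureTheory Finset

/-- Multivariate Poisson mixture density. -/
noncomputable def mixDensity {d : ℕ} (prior : Measure (Fin d → ℝ))
    (x : Fin d → ℕ) : ℝ :=
  ∫ θ, (∏ j, poissonPMF (θ j) (x j)) ∂prior

lemma poissonPMF_succ (θ : ℝ) (k : ℕ) :
    poissonPMF θ (k + 1) = poissonPMF θ k * (θ / (k + 1)) := by
  have hk : ((k : ℝ) + 1) ≠ 0 := by positivity
  have hf : (Nat.factorial k : ℝ) ≠ 0 := by positivity
  simp only [poissonPMF, Nat.factorial_succ, pow_succ, Nat.cast_mul, Nat.cast_add, Nat.cast_one]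
  field_simp

lemma prod_shift {d : ℕ} (θ : Fin d → ℝ) (x : Fin d → ℕ) (i : Fin d) :
    (∏ j, poissonPMF (θ j) (if j = i then x j + 1 else x j))
      = (∏ j, poissonPMF (θ j) (x j)) * (θ i / (x i + 1)) := by
  have h : ∀ j ∈ Finset.univ, poissonPMF (θ j) (if j = i then x j + 1 else x j)
      = poissonPMF (θ j) (x j) * (if j = i then θ i / (x i + 1) else 1) := by
    intro j _
    by_cases hj : j = i
    · subst hj; simp [poissonPMF_succ]
    · simp [hj]
  rw [Finset.prod_congr rfl h, Finset.prod_mul_distrib, Finset.prod_ite_eq' Finset.univ i]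
  simp

/-- The `i`-th coordinate of the multivariate Bayes estimator,
`f*_i(x) = (x_i+1)·p_π(x+e_i)/p_π(x)`, is monotone in the `i`-th coordinate. -/
theorem stmt_19 (d : ℕ) (prior : Measure (Fin d → ℝ)) [IsProbabilityMeasure prior]
    (hsupp : ∀ᵐ θ ∂prior, ∀ j, 0 ≤ θ j)
    (hint : ∀ x : Fin d → ℕ,
      Integrable (fun θ => ∏ j, poissonPMF (θ j) (x j)) prior)
    (i : Fin d) (x : Fin d → ℕ)
    (hx : 0 < mixDensity prior x)
    (hx1 : 0 < mixDensity prior (fun j => if j = i then x j + 1 else x j)) :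
    ((x i : ℝ) + 1) * mixDensity prior (fun j => if j = i then x j + 1 else x j)
        / mixDensity prior x
      ≤ ((x i : ℝ) + 2) * mixDensity prior (fun j => if j = i then x j + 2 else x j)
          / mixDensity prior (fun j => if j = i then x j + 1 else x j) := by
  set n : ℝ := (x i : ℝ) with hn
  have hn1 : (0:ℝ) < n + 1 := by positivity
  have hn2 : (0:ℝ) < n + 2 := by positivity
  set F : (Fin d → ℝ) → ℝ := fun θ => ∏ j, poissonPMF (θ j) (x j) with hF
  set y1 : Fin d → ℕ := fun j => if j = i then x j + 1 else x j with hy1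
  set y2 : Fin d → ℕ := fun j => if j = i then x j + 2 else x j with hy2
  -- pointwise product identities
  have h1 : ∀ θ : Fin d → ℝ, (∏ j, poissonPMF (θ j) (y1 j)) = F θ * θ i / (n + 1) := by
    intro θ
    rw [hy1, prod_shift θ x i, mul_div_assoc]
  have hy2' : (fun j => if j = i then y1 j + 1 else y1 j) = y2 := by
    funext j
    by_cases hj : j = i <;> simp [hy1, hy2, hj]
  have h2 : ∀ θ : Fin d → ℝ, (∏ j, poissonPMF (θ j) (y2 j)) = F θ * θ i * θ i / ((n + 1) * (n + 2)) := by
    intro θ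
    rw [← hy2', prod_shift θ y1 i, h1]
    have : ((y1 i : ℝ) + 1) = n + 2 := by simp [hy1, hn]; ring
    rw [this]
    field_simp
  -- integrability
  have hA : Integrable F prior := hint x
  have hB : Integrable (fun θ => F θ * θ i) prior := by
    have := (hint y1).const_mul (n + 1)
    refine this.congr (Filter.Eventually.of_forall fun θ => ?_)
    dsimp only
    rw [h1 θ]
    field_simp
  have hC : Integrable (fun θ => F θ * θ i * θ i) prior := by
    have := (hint y2).const_mul ((n + 1) * (n + 2))
    refine this.congr (Filter.Eventually.of_forall fun θ => ?_)
    dsimp only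
    rw [h2 θ]
    field_simp
  set A : ℝ := ∫ θ, F θ ∂prior with hAdef
  set B : ℝ := ∫ θ, F θ * θ i ∂prior with hBdef
  set C : ℝ := ∫ θ, F θ * θ i * θ i ∂prior with hCdef
  have hA' : mixDensity prior x = A := rfl
  have hB' : mixDensity prior y1 = B / (n + 1) := by
    rw [mixDensity]
    simp_rw [h1, div_eq_mul_inv, integral_mul_const]
    rfl
  have hC' : mixDensity prior y2 = C / ((n + 1) * (n + 2)) := by
    rw [mixDensity]
    simp_rw [h2, div_eq_mul_inv, integral_mul_const]
    rfl
  -- Cauchy–Schwarz via the discriminant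
  have hFpos : ∀ᵐ θ ∂prior, 0 ≤ F θ := by
    filter_upwards [hsupp] with θ hθ
    exact Finset.prod_nonneg fun j _ =>
      div_nonneg (mul_nonneg (Real.exp_pos _).le (pow_nonneg (hθ j) _)) (Nat.cast_nonneg _)
  have hquad : ∀ t : ℝ, 0 ≤ C * (t * t) + (2 * B) * t + A := by
    intro t
    have heq : C * (t * t) + (2 * B) * t + A
        = ∫ θ, (F θ * θ i * θ i) * (t * t) + ((F θ * θ i) * (2 * t) + F θ) ∂prior := by
      have hg : Integrable (fun θ => F θ * θ i * (2 * t) + F θ) prior :=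
        (hB.mul_const (2 * t)).add hA
      rw [integral_add (hC.mul_const (t * t)) hg]
      rw [integral_add (hB.mul_const (2 * t)) hA, integral_mul_const, integral_mul_const,
        ← hAdef, ← hBdef, ← hCdef]
      ring
    rw [heq]
    apply integral_nonneg_of_ae
    filter_upwards [hFpos] with θ hθ
    have : (F θ * θ i * θ i) * (t * t) + ((F θ * θ i) * (2 * t) + F θ)
        = F θ * (t * θ i + 1) ^ 2 := by ring
    rw [this]
    positivity
  have hdisc := discrim_le_zero hquad
  rw [discrim] at hdisc
  have hCS : B * B ≤ A * C := by nlinarith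
  -- conclude
  have hApos : 0 < A := by rwa [hA'] at hx
  have hBpos : 0 < B := by
    rw [hB'] at hx1
    have := (div_pos_iff.mp hx1)
    rcases this with ⟨h, _⟩ | ⟨_, h⟩
    · exact h
    · linarith
  rw [hA', hB', hC']
  have e1 : (n + 1) * (B / (n + 1)) = B := by field_simp
  have e2 : (n + 2) * (C / ((n + 1) * (n + 2))) = C / (n + 1) := by
    field_simp
  rw [e1, e2]
  have e3 : C / (n + 1) / (B / (n + 1)) = C / B := by
    have hB0 : B ≠ 0 := ne_of_gt hBpos
    have h10 : n + 1 ≠ 0 := ne_of_gt hn1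
    field_simp
  rw [e3, div_le_div_iff₀ hApos hBpos]
  nlinarith
end
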